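/- arXiv:math/0107064 — 2 statements merged into one kernel-verified Lean document; each statement's English description precedes it below -/
import Mathlib

section
/- In the depth-2 Jones tower setup, the multiplication map A ⊗_k B → M₂, a ⊗ b ↦ ab, is injective with image exactly the centralizer C = C_{M₂}(N); likewise the multiplication map B ⊗_k A → M₂, b ⊗ a ↦ ba, is injective with image C. Thus C ≅ A ⊗_k B ≅ B ⊗_k A as k-vector spaces via multiplication. -/
open scoped TensorProduct

/-- The depth-2 Jones tower setup: a tower `N ⊆ M ⊆ M₁ ⊆ R` (with `R` playing the
role of `M₂`) of unital `k`-algebras, with conditional expectations, Jones idempotents,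
braid-like relations and depth-2 orthogonal dual bases, as in the paper. -/
structure JonesTower (k : Type*) [Field k] (R : Type*) [Ring R] [Algebra k R] where
  N : Subalgebra k R
  M : Subalgebra k R
  M₁ : Subalgebra k R
  hNM : N ≤ M
  hMM₁ : M ≤ M₁
  lam : k
  hlam : lam ≠ 0
  E : R →ₗ[k] R
  EM : R →ₗ[k] R
  EM1 : R →ₗ[k] R
  hE_mem : ∀ m ∈ M, E m ∈ N
  hEM_mem : ∀ x ∈ M₁, EM x ∈ M
  hEM1_mem : ∀ x : R, EM1 x ∈ M₁
  hE_one : E 1 = 1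
  hEM_one : EM 1 = 1
  hEM1_one : EM1 1 = 1
  hE_bimod : ∀ n ∈ N, ∀ n' ∈ N, ∀ m ∈ M, E (n * m * n') = n * E m * n'
  hEM_bimod : ∀ m ∈ M, ∀ m' ∈ M, ∀ x ∈ M₁, EM (m * x * m') = m * EM x * m'
  hEM1_bimod : ∀ w ∈ M₁, ∀ w' ∈ M₁, ∀ x : R, EM1 (w * x * w') = w * EM1 x * w'
  n₀ : ℕ
  xb : Fin n₀ → R
  yb : Fin n₀ → R
  hxb : ∀ i, xb i ∈ M
  hyb : ∀ i, yb i ∈ M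
  hE_dual₁ : ∀ m ∈ M, ∑ i, E (m * xb i) * yb i = m
  hE_dual₂ : ∀ m ∈ M, ∑ i, xb i * E (yb i * m) = m
  hE_index : ∑ i, xb i * yb i = lam⁻¹ • (1 : R)
  hCMN : ∀ c ∈ M, (∀ n ∈ N, c * n = n * c) → ∃ μ : k, c = μ • (1 : R)
  hCM₁M : ∀ c ∈ M₁, (∀ m ∈ M, c * m = m * c) → ∃ μ : k, c = μ • (1 : R)
  hCM₂M₁ : ∀ c : R, (∀ w ∈ M₁, c * w = w * c) → ∃ μ : k, c = μ • (1 : R)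
  e₁ : R
  e₂ : R
  he₁ : e₁ ∈ M₁
  he₁N : ∀ n ∈ N, e₁ * n = n * e₁
  he₂M : ∀ m ∈ M, e₂ * m = m * e₂
  he₁me₁ : ∀ m ∈ M, e₁ * m * e₁ = E m * e₁
  he₂we₂ : ∀ w ∈ M₁, e₂ * w * e₂ = EM w * e₂
  hEMe₁ : EM e₁ = lam • (1 : R)
  hEM1e₂ : EM1 e₂ = lam • (1 : R)
  hspanM₁ : Subalgebra.toSubmodule M₁ =
    Submodule.span k {x : R | ∃ m ∈ M, ∃ m' ∈ M, x = m * e₁ * m'}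
  hspanM₂ : (⊤ : Submodule k R) =
    Submodule.span k {x : R | ∃ w ∈ M₁, ∃ w' ∈ M₁, x = w * e₂ * w'}
  hbraid₁ : e₁ * e₂ * e₁ = lam • e₁
  hbraid₂ : e₂ * e₁ * e₂ = lam • e₂
  r : ℕ
  zb : Fin r → R
  wb : Fin r → R
  hzbM₁ : ∀ i, zb i ∈ M₁
  hwbM₁ : ∀ i, wb i ∈ M₁
  hzbN : ∀ i, ∀ n ∈ N, zb i * n = n * zb i
  hwbN : ∀ i, ∀ n ∈ N, wb i * n = n * wb i
  hzw_orth : ∀ i j, EM (wb i * zb j) = if i = j then (1 : R) else 0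
  hzw_dual₁ : ∀ x ∈ M₁, ∑ i, EM (x * zb i) * wb i = x
  hzw_dual₂ : ∀ x ∈ M₁, ∑ i, zb i * EM (wb i * x) = x
  hzw_index : ∑ i, zb i * wb i = lam⁻¹ • (1 : R)
  s : ℕ
  ub : Fin s → R
  vb : Fin s → R
  hubM : ∀ i, ∀ m ∈ M, ub i * m = m * ub i
  hvbM : ∀ i, ∀ m ∈ M, vb i * m = m * vb i
  huv_orth : ∀ i j, EM1 (vb i * ub j) = if i = j then (1 : R) else 0
  huv_dual₁ : ∀ x : R, ∑ i, EM1 (x * ub i) * vb i = x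
  huv_dual₂ : ∀ x : R, ∑ i, ub i * EM1 (vb i * x) = x
  huv_index : ∑ i, ub i * vb i = lam⁻¹ • (1 : R)
  F : R →ₗ[k] k
  hF : ∀ c : R, (∀ n ∈ N, c * n = n * c) → algebraMap k R (F c) = EM (EM1 c)

variable {k : Type*} [Field k] {R : Type*} [Ring R] [Algebra k R]

/-- The second centralizer `A = C_{M₁}(N)`. -/
def JonesTower.A (T : JonesTower k R) : Subalgebra k R :=
  T.M₁ ⊓ Subalgebra.centralizer k (T.N : Set R)

/-- The second centralizer `B = C_{M₂}(M)`. -/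
def JonesTower.B (T : JonesTower k R) : Subalgebra k R :=
  Subalgebra.centralizer k (T.M : Set R)

/-- The big centralizer `C = C_{M₂}(N)`. -/
def JonesTower.C (T : JonesTower k R) : Subalgebra k R :=
  Subalgebra.centralizer k (T.N : Set R)

/-!
Since `E_{M₁}` is an `M₁`-bimodule map, it preserves commutation with any subset of `M₁`; hence
it maps `C` into `A` and `B` into `C_{M₁}(M) = k`. The dual-basis expansions
`c = ∑ᵢ E_{M₁}(c uᵢ) vᵢ = ∑ᵢ uᵢ E_{M₁}(vᵢ c)` then give `C = AB = BA`, and, applied to `c ∈ B`,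
show that the `vᵢ` (resp. the `uᵢ`) span `B` over `k`. Orthogonality `E_{M₁}(vᵢ uⱼ) = δᵢⱼ`
recovers `aⱼ` from `∑ᵢ aᵢ vᵢ` as `E_{M₁}((∑ᵢ aᵢ vᵢ) uⱼ)`, so the `vᵢ` are independent over `A`;
a spanning family of `B` that is independent over `A` makes `A ⊗ₖ B → M₂` injective.
-/

namespace Submodule

variable {K S : Type*} [CommSemiring K] [Semiring S] [Algebra K S] {M N : Submodule K S}
  {ι : Type*}

theorem LinearDisjoint.of_span_right (n : ι → N) (hn : span K (Set.range n) = ⊤)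
    (H : Function.Injective (mulRightMap M n)) : M.LinearDisjoint N := by
  classical
  rw [mulRightMap_eq_mulMap_comp, LinearMap.coe_comp] at H
  have hsurj : Function.Surjective (Finsupp.linearCombination K n) :=
    LinearMap.range_eq_top.1 (by rw [Finsupp.range_linearCombination, hn])
  exact ⟨H.of_comp_right <|
    (LinearMap.lTensor_surjective M hsurj).comp (LinearEquiv.surjective _)⟩

theorem LinearDisjoint.of_span_left (m : ι → M) (hm : span K (Set.range m) = ⊤)
    (H : Function.Injective (mulLeftMap N m)) : M.LinearDisjoint N := by
  classical
  rw [mulLeftMap_eq_mulMap_comp, LinearMap.coe_comp] at H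
  have hsurj : Function.Surjective (Finsupp.linearCombination K m) :=
    LinearMap.range_eq_top.1 (by rw [Finsupp.range_linearCombination, hm])
  exact ⟨H.of_comp_right <|
    (LinearMap.rTensor_surjective N hsurj).comp (LinearEquiv.surjective _)⟩

end Submodule

namespace JonesTower

variable (T : JonesTower k R)

lemma EM1_mul_left {a : R} (ha : a ∈ T.M₁) (x : R) : T.EM1 (a * x) = a * T.EM1 x := by
  simpa using T.hEM1_bimod a ha 1 T.M₁.one_mem x

lemma EM1_mul_right {a : R} (ha : a ∈ T.M₁) (x : R) : T.EM1 (x * a) = T.EM1 x * a := by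
  simpa using T.hEM1_bimod 1 T.M₁.one_mem a ha x

lemma EM1_mem_centralizer {S : Set R} (hS : S ⊆ T.M₁) {x : R} (hx : x ∈ S.centralizer) :
    T.EM1 x ∈ S.centralizer := fun s hs => by
  rw [← T.EM1_mul_left (hS hs), ← T.EM1_mul_right (hS hs), hx s hs]

lemma A_le_M₁ : T.A ≤ T.M₁ := inf_le_left

lemma A_le_C : T.A ≤ T.C := inf_le_right

lemma B_le_C : T.B ≤ T.C := Subalgebra.centralizer_le k _ _ T.hNM

lemma EM1_mem_A {x : R} (hx : x ∈ T.C) : T.EM1 x ∈ T.A :=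
  ⟨T.hEM1_mem x, T.EM1_mem_centralizer (fun _ hn => T.hMM₁ (T.hNM hn)) hx⟩

lemma exists_EM1_eq_smul_one {x : R} (hx : x ∈ T.B) : ∃ μ : k, T.EM1 x = μ • 1 :=
  T.hCM₁M _ (T.hEM1_mem x) fun m hm => (T.EM1_mem_centralizer T.hMM₁ hx m hm).symm

lemma ub_mem_B (i : Fin T.s) : T.ub i ∈ T.B := fun m hm => (T.hubM i m hm).symm

lemma vb_mem_B (i : Fin T.s) : T.vb i ∈ T.B := fun m hm => (T.hvbM i m hm).symm

def ubB (i : Fin T.s) : Subalgebra.toSubmodule T.B := ⟨T.ub i, T.ub_mem_B i⟩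

def vbB (i : Fin T.s) : Subalgebra.toSubmodule T.B := ⟨T.vb i, T.vb_mem_B i⟩

lemma span_vbB : Submodule.span k (Set.range T.vbB) = ⊤ := by
  refine eq_top_iff.2 fun b _ => ?_
  choose μ hμ using fun i => T.exists_EM1_eq_smul_one (T.B.mul_mem b.2 (T.ub_mem_B i))
  refine (Submodule.mem_span_range_iff_exists_fun k).2 ⟨μ, Subtype.ext ?_⟩
  conv_rhs => rw [← T.huv_dual₁ b]
  simp [hμ, vbB]

lemma span_ubB : Submodule.span k (Set.range T.ubB) = ⊤ := by
  refine eq_top_iff.2 fun b _ => ?_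
  choose μ hμ using fun i => T.exists_EM1_eq_smul_one (T.B.mul_mem (T.vb_mem_B i) b.2)
  refine (Submodule.mem_span_range_iff_exists_fun k).2 ⟨μ, Subtype.ext ?_⟩
  conv_rhs => rw [← T.huv_dual₂ b]
  simp [hμ, ubB]

lemma mulRightMap_vbB_injective :
    Function.Injective (Submodule.mulRightMap (Subalgebra.toSubmodule T.A) T.vbB) := by
  refine (injective_iff_map_eq_zero _).2 fun f hf => Finsupp.ext fun j => Subtype.ext ?_
  rw [Submodule.mulRightMap_apply, Finsupp.sum_fintype _ _ (by simp)] at hf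
  calc (f j : R) = ∑ i, f i * T.EM1 (T.vb i * T.ub j) := by simp [T.huv_orth]
    _ = T.EM1 ((∑ i, f i * T.vb i) * T.ub j) := by
      simp only [Finset.sum_mul, map_sum, mul_assoc, T.EM1_mul_left (T.A_le_M₁ (f _).2)]
    _ = 0 := by rw [show ∑ i, (f i : R) * T.vb i = 0 from hf, zero_mul, map_zero]

lemma mulLeftMap_ubB_injective :
    Function.Injective (Submodule.mulLeftMap (Subalgebra.toSubmodule T.A) T.ubB) := by
  refine (injective_iff_map_eq_zero _).2 fun f hf => Finsupp.ext fun j => Subtype.ext ?_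
  rw [Submodule.mulLeftMap_apply, Finsupp.sum_fintype _ _ (by simp)] at hf
  calc (f j : R) = ∑ i, T.EM1 (T.vb j * T.ub i) * f i := by simp [T.huv_orth]
    _ = T.EM1 (T.vb j * ∑ i, T.ub i * f i) := by
      simp only [Finset.mul_sum, map_sum, ← mul_assoc, T.EM1_mul_right (T.A_le_M₁ (f _).2)]
    _ = 0 := by rw [show ∑ i, T.ub i * (f i : R) = 0 from hf, mul_zero, map_zero]

lemma toSubmodule_A_mul_B :
    Subalgebra.toSubmodule T.A * Subalgebra.toSubmodule T.B = Subalgebra.toSubmodule T.C := by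
  refine le_antisymm (Submodule.mul_le.2 fun a ha b hb => T.C.mul_mem (T.A_le_C ha) (T.B_le_C hb))
    fun c hc => ?_
  rw [← T.huv_dual₁ c]
  exact Submodule.sum_mem _ fun i _ => Submodule.mul_mem_mul
    (T.EM1_mem_A (T.C.mul_mem hc (T.B_le_C (T.ub_mem_B i)))) (T.vb_mem_B i)

lemma toSubmodule_B_mul_A :
    Subalgebra.toSubmodule T.B * Subalgebra.toSubmodule T.A = Subalgebra.toSubmodule T.C := by
  refine le_antisymm (Submodule.mul_le.2 fun b hb a ha => T.C.mul_mem (T.B_le_C hb) (T.A_le_C ha))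
    fun c hc => ?_
  rw [← T.huv_dual₂ c]
  exact Submodule.sum_mem _ fun i _ => Submodule.mul_mem_mul
    (T.ub_mem_B i) (T.EM1_mem_A (T.C.mul_mem (T.B_le_C (T.vb_mem_B i)) hc))

end JonesTower

theorem C_is_A_tensor_B_general (T : JonesTower k R) :
    (Function.Injective
        ((Subalgebra.toSubmodule T.A).mulMap (Subalgebra.toSubmodule T.B)) ∧
      LinearMap.range
        ((Subalgebra.toSubmodule T.A).mulMap (Subalgebra.toSubmodule T.B)) =
        Subalgebra.toSubmodule T.C) ∧
    (Function.Injective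
        ((Subalgebra.toSubmodule T.B).mulMap (Subalgebra.toSubmodule T.A)) ∧
      LinearMap.range
        ((Subalgebra.toSubmodule T.B).mulMap (Subalgebra.toSubmodule T.A)) =
        Subalgebra.toSubmodule T.C) := by
  rw [Submodule.mulMap_range, Submodule.mulMap_range]
  exact ⟨⟨(Submodule.LinearDisjoint.of_span_right _ T.span_vbB
      T.mulRightMap_vbB_injective).injective, T.toSubmodule_A_mul_B⟩,
    (Submodule.LinearDisjoint.of_span_left _ T.span_ubB
      T.mulLeftMap_ubB_injective).injective, T.toSubmodule_B_mul_A⟩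

/-- The multiplication maps `A ⊗ₖ B → M₂` and `B ⊗ₖ A → M₂` are injective with
image exactly the big centralizer `C = C_{M₂}(N)`. -/
theorem C_is_A_tensor_B (T : JonesTower k R) [Nontrivial R] :
    (Function.Injective
        ((Subalgebra.toSubmodule T.A).mulMap (Subalgebra.toSubmodule T.B)) ∧
      LinearMap.range
        ((Subalgebra.toSubmodule T.A).mulMap (Subalgebra.toSubmodule T.B)) =
        Subalgebra.toSubmodule T.C) ∧
    (Function.Injective
        ((Subalgebra.toSubmodule T.B).mulMap (Subalgebra.toSubmodule T.A)) ∧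
      LinearMap.range
        ((Subalgebra.toSubmodule T.B).mulMap (Subalgebra.toSubmodule T.A)) =
        Subalgebra.toSubmodule T.C) :=
  C_is_A_tensor_B_general T
end

section
/- In the depth-2 Jones tower setup, the linear functional F : C → k is faithful (non-degenerate): if c ∈ C satisfies F(cc') = 0 for all c' ∈ C, then c = 0; equivalently, if F(c'c) = 0 for all c' ∈ C, then c = 0. -/
open scoped TensorProduct

variable {k : Type*} [Field k] {R : Type*} [Ring R] [Algebra k R]

/-!
Iterating the two depth-2 quasi-bases expands every `c ∈ C` as
`c = ∑ F(c uⱼ zᵢ) wᵢ vⱼ = ∑ F(wᵢ vⱼ c) uⱼ zᵢ`, since `E_M ∘ E_{M₁}` acts on `C` as `F`.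
The elements `uⱼ zᵢ` and `wᵢ vⱼ` lie in `C`, so `F(cC) = 0` or `F(Cc) = 0` forces `c = 0`.
-/

namespace JonesTower

variable (T : JonesTower k R)

lemma mem_C_iff {x : R} : x ∈ T.C ↔ ∀ n ∈ T.N, n * x = x * n :=
  Subalgebra.mem_centralizer_iff k

lemma mem_C_of_commute_N {x : R} (hx : ∀ n ∈ T.N, x * n = n * x) : x ∈ T.C :=
  T.mem_C_iff.2 fun n hn => (hx n hn).symm

lemma mem_C_of_commute_M {x : R} (hx : ∀ m ∈ T.M, x * m = m * x) : x ∈ T.C :=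
  T.mem_C_of_commute_N fun n hn => hx n (T.hNM hn)

lemma ub_mul_zb_mem_C (j : Fin T.s) (i : Fin T.r) : T.ub j * T.zb i ∈ T.C :=
  mul_mem (T.mem_C_of_commute_M (T.hubM j)) (T.mem_C_of_commute_N (T.hzbN i))

lemma wb_mul_vb_mem_C (i : Fin T.r) (j : Fin T.s) : T.wb i * T.vb j ∈ T.C :=
  mul_mem (T.mem_C_of_commute_N (T.hwbN i)) (T.mem_C_of_commute_M (T.hvbM j))

lemma algebraMap_F_of_mem_C {c : R} (hc : c ∈ T.C) :
    algebraMap k R (T.F c) = T.EM (T.EM1 c) :=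
  T.hF c fun n hn => (T.mem_C_iff.1 hc n hn).symm

lemma EM1_mul_right_of_mem {w : R} (hw : w ∈ T.M₁) (x : R) : T.EM1 (x * w) = T.EM1 x * w := by
  simpa using T.hEM1_bimod 1 (one_mem _) w hw x

lemma EM1_mul_left_of_mem {w : R} (hw : w ∈ T.M₁) (x : R) : T.EM1 (w * x) = w * T.EM1 x := by
  simpa using T.hEM1_bimod w hw 1 (one_mem _) x

lemma sum_F_mul_right_smul_eq {c : R} (hc : c ∈ T.C) :
    ∑ j, ∑ i, T.F (c * (T.ub j * T.zb i)) • (T.wb i * T.vb j) = c :=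
  calc _ = ∑ j, (∑ i, T.EM (T.EM1 (c * T.ub j) * T.zb i) * T.wb i) * T.vb j := by
        refine Finset.sum_congr rfl fun j _ => ?_
        rw [Finset.sum_mul]
        refine Finset.sum_congr rfl fun i _ => ?_
        rw [← T.EM1_mul_right_of_mem (T.hzbM₁ i), mul_assoc c,
          ← T.algebraMap_F_of_mem_C (mul_mem hc (T.ub_mul_zb_mem_C j i)), Algebra.smul_def,
          mul_assoc]
    _ = ∑ j, T.EM1 (c * T.ub j) * T.vb j := by simp_rw [T.hzw_dual₁ _ (T.hEM1_mem _)]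
    _ = c := T.huv_dual₁ c

lemma sum_F_mul_left_smul_eq {c : R} (hc : c ∈ T.C) :
    ∑ j, ∑ i, T.F (T.wb i * T.vb j * c) • (T.ub j * T.zb i) = c :=
  calc _ = ∑ j, T.ub j * ∑ i, T.zb i * T.EM (T.wb i * T.EM1 (T.vb j * c)) := by
        refine Finset.sum_congr rfl fun j _ => ?_
        rw [Finset.mul_sum]
        refine Finset.sum_congr rfl fun i _ => ?_
        rw [← T.EM1_mul_left_of_mem (T.hwbM₁ i), ← mul_assoc (T.wb i),
          ← T.algebraMap_F_of_mem_C (mul_mem (T.wb_mul_vb_mem_C i j) hc), ← mul_assoc,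
          ← Algebra.commutes, ← Algebra.smul_def]
    _ = ∑ j, T.ub j * T.EM1 (T.vb j * c) := by simp_rw [T.hzw_dual₂ _ (T.hEM1_mem _)]
    _ = c := T.huv_dual₂ c

end JonesTower

theorem F_is_faithful_general (T : JonesTower k R) :
    (∀ c ∈ T.C, (∀ c' ∈ T.C, T.F (c * c') = 0) → c = 0) ∧
    (∀ c ∈ T.C, (∀ c' ∈ T.C, T.F (c' * c) = 0) → c = 0) := by
  refine ⟨fun c hc h0 => ?_, fun c hc h0 => ?_⟩
  · rw [← T.sum_F_mul_right_smul_eq hc]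
    exact Finset.sum_eq_zero fun j _ => Finset.sum_eq_zero fun i _ => by
      rw [h0 _ (T.ub_mul_zb_mem_C j i), zero_smul]
  · rw [← T.sum_F_mul_left_smul_eq hc]
    exact Finset.sum_eq_zero fun j _ => Finset.sum_eq_zero fun i _ => by
      rw [h0 _ (T.wb_mul_vb_mem_C i j), zero_smul]

/-- The functional `F = E_M ∘ E_{M₁}` is faithful (non-degenerate) on `C`:
if `F(cC) = 0` then `c = 0`, and if `F(Cc) = 0` then `c = 0`. -/
theorem F_is_faithful (T : JonesTower k R) [Nontrivial R] :
    (∀ c ∈ T.C, (∀ c' ∈ T.C, T.F (c * c') = 0) → c = 0) ∧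
    (∀ c ∈ T.C, (∀ c' ∈ T.C, T.F (c' * c) = 0) → c = 0) :=
  F_is_faithful_general T
end
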